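/- Let Φ be the set of laws F_n(ℙ) of terminal values of spherical martingales (F_i)_{i=0}^n valued in an open set O ⊆ ℝ^d with fixed initial law F_0 ∼ μ. Then Φ is convex: for any two such laws σ', σ'', the average (σ' + σ'')/2 is again the terminal law of a spherical martingale in O starting from μ. -/

import Mathlib

open MeasureTheory ProbabilityTheory
open scoped ENNReal

/-- `σ` is the law of the terminal value `F n` of a spherical martingale
`(F_k)_{k ≤ n}` valued in `O`, driven by i.i.d. directions `X_k` with common law
`U` (the uniform measure on the unit sphere), with bounded history-measurable
radius functions, and with initial law `F 0 ∼ μ`. -/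
def IsSphericalTerminalLaw (d : ℕ) (O : Set (EuclideanSpace ℝ (Fin d)))
    (U μ σ : Measure (EuclideanSpace ℝ (Fin d))) : Prop :=
  ∃ (n : ℕ) (Ω : Type) (_ : MeasurableSpace Ω) (P : Measure Ω),
    IsProbabilityMeasure P ∧
    ∃ (F X : ℕ → Ω → EuclideanSpace ℝ (Fin d)) (r : ℕ → Ω → ℝ),
      (∀ k, Measurable (F k)) ∧ (∀ k, Measurable (X k)) ∧ (∀ k, Measurable (r k)) ∧
      P.map (F 0) = μ ∧
      (∀ k, 1 ≤ k → P.map (X k) = U) ∧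
      iIndepFun
        (fun k => if k = 0 then F 0 else X k) P ∧
      (∀ k, ∃ C : ℝ, ∀ ω, 0 ≤ r k ω ∧ r k ω ≤ C) ∧
      (∀ k < n, ∀ ω, F (k + 1) ω = F k ω + r (k + 1) ω • X (k + 1) ω) ∧
      (∀ k < n, Measurable[MeasurableSpace.comap
          (fun ω => (F 0 ω, fun i : Fin k => X (i + 1) ω)) inferInstance]
        (r (k + 1))) ∧
      (∀ ω, F 0 ω ∈ O) ∧
      (∀ k < n, ∀ ω, ∀ lam ∈ Set.Icc (0 : ℝ) 1,
        F k ω + (lam * r (k + 1) ω) • X (k + 1) ω ∈ O) ∧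
      P.map (F n) = σ

/-!
Mix the two martingales by a coin flip. On `Ω₁ × Ω₂ × E` with `P₁ ⊗ P₂ ⊗ U`, the first
direction is the third coordinate and gets radius `0`; afterwards the process runs the first
martingale if that direction lies in the upper hemisphere and the second one otherwise. Both
driving families `(F 0, X 1, X 2, …)` have the law `μ ⊗ U ⊗ U ⊗ ⋯`, so the selected family has
this law whatever the coin shows and is therefore independent of it: the mixture is again a
spherical martingale, and its terminal law is `½ σ' + ½ σ''`. Stopping each martingale at its own
horizon first lets both run up to the common horizon `max n₁ n₂`.
-/

open Set

section SelectByCoin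

variable {Ω₁ Ω₂ α β : Type*} {s : Set β} {f : Ω₁ → α} {g : Ω₂ → α}

open scoped Classical in
noncomputable def selectByCoin (s : Set β) (f : Ω₁ → α) (g : Ω₂ → α) (ω : Ω₁ × Ω₂ × β) : α :=
  if ω.2.2 ∈ s then f ω.1 else g ω.2.1

theorem selectByCoin_preimage_inter (E : Set α) (B : Set β) :
    selectByCoin s f g ⁻¹' E ∩ univ ×ˢ univ ×ˢ B =
      (f ⁻¹' E) ×ˢ univ ×ˢ (B ∩ s) ∪ univ ×ˢ (g ⁻¹' E) ×ˢ (B \ s) := by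
  ext ⟨ω₁, ω₂, b⟩
  by_cases hb : b ∈ s <;> simp [selectByCoin, hb, and_comm]

@[simp]
theorem selectByCoin_of_mem {ω : Ω₁ × Ω₂ × β} (h : ω.2.2 ∈ s) : selectByCoin s f g ω = f ω.1 :=
  if_pos h

@[simp]
theorem selectByCoin_of_notMem {ω : Ω₁ × Ω₂ × β} (h : ω.2.2 ∉ s) :
    selectByCoin s f g ω = g ω.2.1 :=
  if_neg h

theorem selectByCoin_mem {A : Set α} (hf : ∀ ω₁, f ω₁ ∈ A) (hg : ∀ ω₂, g ω₂ ∈ A)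
    (ω : Ω₁ × Ω₂ × β) : selectByCoin s f g ω ∈ A := by
  by_cases h : ω.2.2 ∈ s
  · simpa [h] using hf ω.1
  · simpa [h] using hg ω.2.1

variable [MeasurableSpace Ω₁] [MeasurableSpace Ω₂] [MeasurableSpace α] [MeasurableSpace β]
  {P₁ : Measure Ω₁} {P₂ : Measure Ω₂} {ν : Measure β}

theorem measurable_selectByCoin (hs : MeasurableSet s) (hf : Measurable f) (hg : Measurable g) :
    Measurable (selectByCoin s f g) := by
  classical
  exact Measurable.ite (measurable_snd.snd hs) (hf.comp measurable_fst)
    (hg.comp measurable_snd.fst)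

theorem measure_selectByCoin_preimage_inter [IsProbabilityMeasure P₁] [IsProbabilityMeasure P₂]
    [SFinite ν] (hs : MeasurableSet s) (hg : Measurable g) {E : Set α} (hE : MeasurableSet E)
    {B : Set β} (hB : MeasurableSet B) :
    P₁.prod (P₂.prod ν) (selectByCoin s f g ⁻¹' E ∩ univ ×ˢ univ ×ˢ B) =
      P₁ (f ⁻¹' E) * ν (B ∩ s) + P₂ (g ⁻¹' E) * ν (B \ s) := by
  have hdisj : Disjoint ((f ⁻¹' E) ×ˢ univ ×ˢ (B ∩ s)) (univ ×ˢ (g ⁻¹' E) ×ˢ (B \ s)) :=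
    disjoint_left.2 fun ω h₁ h₂ => h₂.2.2.2 h₁.2.2.2
  rw [selectByCoin_preimage_inter, measure_union hdisj
    (MeasurableSet.univ.prod ((hg hE).prod (hB.diff hs))), Measure.prod_prod, Measure.prod_prod,
    Measure.prod_prod, Measure.prod_prod]
  simp

theorem map_selectByCoin [IsProbabilityMeasure P₁] [IsProbabilityMeasure P₂] [SFinite ν]
    (hs : MeasurableSet s) (hf : Measurable f) (hg : Measurable g) :
    (P₁.prod (P₂.prod ν)).map (selectByCoin s f g) = ν s • P₁.map f + ν sᶜ • P₂.map g := by
  ext E hE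
  have h := measure_selectByCoin_preimage_inter (P₁ := P₁) (P₂ := P₂) (ν := ν) (f := f) hs hg hE
    MeasurableSet.univ
  rw [univ_prod_univ, univ_prod_univ, inter_univ, univ_inter, ← compl_eq_univ_sdiff] at h
  rw [Measure.map_apply (measurable_selectByCoin hs hf hg) hE, h, Measure.add_apply,
    Measure.smul_apply, Measure.smul_apply, Measure.map_apply hf hE, Measure.map_apply hg hE,
    smul_eq_mul, smul_eq_mul, mul_comm, mul_comm (ν sᶜ)]

theorem map_selectByCoin_of_map_eq [IsProbabilityMeasure P₁] [IsProbabilityMeasure P₂]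
    [IsProbabilityMeasure ν] (hs : MeasurableSet s) (hf : Measurable f) (hg : Measurable g)
    (hfg : P₁.map f = P₂.map g) :
    (P₁.prod (P₂.prod ν)).map (selectByCoin s f g) = P₁.map f := by
  rw [map_selectByCoin hs hf hg, ← hfg, ← add_smul, measure_add_measure_compl hs, measure_univ,
    one_smul]

theorem map_snd_snd_prod [IsProbabilityMeasure P₁] [IsProbabilityMeasure P₂] [SFinite ν] :
    (P₁.prod (P₂.prod ν)).map (fun ω => ω.2.2) = ν := by
  change (P₁.prod (P₂.prod ν)).map (Prod.snd ∘ Prod.snd) = ν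
  rw [← Measure.map_map measurable_snd measurable_snd]
  exact (congrArg Measure.snd Measure.snd_prod).trans Measure.snd_prod

theorem measure_selectByCoin_pi_preimage_inter {ι : Type*} {f : ι → Ω₁ → β} {g : ι → Ω₂ → β}
    [IsProbabilityMeasure P₁] [IsProbabilityMeasure P₂] [SFinite ν] (hs : MeasurableSet s)
    (hfm : ∀ i, Measurable (f i)) (hgm : ∀ i, Measurable (g i)) (hf : iIndepFun f P₁)
    (hg : iIndepFun g P₂) (hfg : ∀ i, P₁.map (f i) = P₂.map (g i)) {T : Finset ι}
    {A : ι → Set β} (hA : ∀ i ∈ T, MeasurableSet (A i)) {B : Set β} (hB : MeasurableSet B) :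
    P₁.prod (P₂.prod ν) (selectByCoin s (fun ω i => f i ω) (fun ω i => g i ω) ⁻¹'
      (T : Set ι).pi A ∩ univ ×ˢ univ ×ˢ B) = (∏ i ∈ T, P₁ (f i ⁻¹' A i)) * ν B := by
  have hpi₁ : P₁ ((fun ω i => f i ω) ⁻¹' (T : Set ι).pi A) = ∏ i ∈ T, P₁ (f i ⁻¹' A i) := by
    rw [← hf.measure_inter_preimage_eq_mul T hA]
    congr 1
    ext ω
    simp
  have hpi₂ : P₂ ((fun ω i => g i ω) ⁻¹' (T : Set ι).pi A) = ∏ i ∈ T, P₁ (f i ⁻¹' A i) := by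
    rw [← Finset.prod_congr rfl fun i hi => ?_, ← hg.measure_inter_preimage_eq_mul T hA]
    · congr 1
      ext ω
      simp
    · rw [← Measure.map_apply (hfm i) (hA i hi), hfg, Measure.map_apply (hgm i) (hA i hi)]
  rw [measure_selectByCoin_preimage_inter hs (measurable_pi_lambda _ hgm)
      (.pi T.countable_toSet hA) hB, hpi₁, hpi₂, ← mul_add, measure_inter_add_sdiff _ hs]

theorem iIndepFun_option_selectByCoin {ι : Type*} {f : ι → Ω₁ → β} {g : ι → Ω₂ → β}
    [IsProbabilityMeasure P₁] [IsProbabilityMeasure P₂] [IsProbabilityMeasure ν]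
    (hs : MeasurableSet s) (hfm : ∀ i, Measurable (f i)) (hgm : ∀ i, Measurable (g i))
    (hf : iIndepFun f P₁) (hg : iIndepFun g P₂) (hfg : ∀ i, P₁.map (f i) = P₂.map (g i)) :
    iIndepFun (fun o : Option ι => o.elim (fun ω => ω.2.2) fun i => selectByCoin s (f i) (g i))
      (P₁.prod (P₂.prod ν)) := by
  classical
  rw [iIndepFun_iff_measure_inter_preimage_eq_mul]
  intro S A hA
  set B := if none ∈ S then A none else univ
  have hB : MeasurableSet B := by
    by_cases h : none ∈ S
    · simpa [B, h] using hA none h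
    · simp [B, h]
  have hevent : ⋂ o ∈ S, (o.elim (fun ω => ω.2.2) fun i => selectByCoin s (f i) (g i)) ⁻¹' A o =
      selectByCoin s (fun ω i => f i ω) (fun ω i => g i ω) ⁻¹'
        (S.eraseNone : Set ι).pi (fun i => A (some i)) ∩ univ ×ˢ univ ×ˢ B := by
    ext ω
    by_cases h : none ∈ S <;> by_cases hc : ω.2.2 ∈ s <;>
      simp [B, h, hc, Option.forall, and_comm]
  have hfactor : ∀ o ∈ S,
      P₁.prod (P₂.prod ν) ((o.elim (fun ω => ω.2.2) fun i => selectByCoin s (f i) (g i)) ⁻¹' A o) =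
        (if o = none then ν (A none) else 1) *
          Option.elim' 1 (fun i => P₁ (f i ⁻¹' A (some i))) o := by
    rintro (_ | i) ho
    · rw [Option.elim_none, ← Measure.map_apply measurable_snd.snd (hA _ ho), map_snd_snd_prod]
      simp
    · simp only [Option.elim_some, reduceCtorEq, if_false, one_mul, Option.elim'_some]
      rw [← Measure.map_apply (measurable_selectByCoin hs (hfm i) (hgm i)) (hA _ ho),
        map_selectByCoin_of_map_eq hs (hfm i) (hgm i) (hfg i), Measure.map_apply (hfm i) (hA _ ho)]
  rw [Finset.prod_congr rfl hfactor, Finset.prod_mul_distrib, Finset.prod_ite_eq',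
    ← Finset.prod_eraseNone, hevent, measure_selectByCoin_pi_preimage_inter hs hfm hgm hf hg hfg
      (fun i hi => hA _ (Finset.mem_eraseNone.1 hi)) hB, mul_comm]
  by_cases h : none ∈ S <;> simp [B, h]

end SelectByCoin

section

variable {E : Type*} [AddCommGroup E] [Module ℝ E] [MeasurableSpace E]

structure SphericalMartingale (O : Set E) (U μ : Measure E) {Ω : Type*} [MeasurableSpace Ω]
    (P : Measure Ω) (n : ℕ) where
  F : ℕ → Ω → E
  X : ℕ → Ω → E
  r : ℕ → Ω → ℝ
  measurable_F : ∀ k, Measurable (F k)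
  measurable_X : ∀ k, Measurable (X k)
  measurable_r : ∀ k, Measurable (r k)
  map_F_zero : P.map (F 0) = μ
  map_X : ∀ k, 1 ≤ k → P.map (X k) = U
  iIndepFun_drivers : iIndepFun (fun k => if k = 0 then F 0 else X k) P
  bounded_r : ∀ k, ∃ C : ℝ, ∀ ω, 0 ≤ r k ω ∧ r k ω ≤ C
  F_succ : ∀ k < n, ∀ ω, F (k + 1) ω = F k ω + r (k + 1) ω • X (k + 1) ω
  adapted_r : ∀ k < n, Measurable[MeasurableSpace.comap
      (fun ω => (F 0 ω, fun i : Fin k => X (i + 1) ω)) inferInstance] (r (k + 1))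
  F_zero_mem : ∀ ω, F 0 ω ∈ O
  segment_mem : ∀ k < n, ∀ ω, ∀ lam ∈ Icc (0 : ℝ) 1,
    F k ω + (lam * r (k + 1) ω) • X (k + 1) ω ∈ O

theorem isSphericalTerminalLaw_iff {d : ℕ} {O : Set (EuclideanSpace ℝ (Fin d))}
    {U μ σ : Measure (EuclideanSpace ℝ (Fin d))} :
    IsSphericalTerminalLaw d O U μ σ ↔
      ∃ (n : ℕ) (Ω : Type) (_ : MeasurableSpace Ω) (P : Measure Ω) (_ : IsProbabilityMeasure P)
        (M : SphericalMartingale O U μ P n), P.map (M.F n) = σ := by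
  constructor
  · rintro ⟨n, Ω, _, P, hP, F, X, r, h₁, h₂, h₃, h₄, h₅, h₆, h₇, h₈, h₉, h₁₀, h₁₁, hσ⟩
    exact ⟨n, Ω, _, P, hP, ⟨F, X, r, h₁, h₂, h₃, h₄, h₅, h₆, h₇, h₈, h₉, h₁₀, h₁₁⟩, hσ⟩
  · rintro ⟨n, Ω, _, P, hP, ⟨F, X, r, h₁, h₂, h₃, h₄, h₅, h₆, h₇, h₈, h₉, h₁₀, h₁₁⟩, hσ⟩
    exact ⟨n, Ω, _, P, hP, F, X, r, h₁, h₂, h₃, h₄, h₅, h₆, h₇, h₈, h₉, h₁₀, h₁₁, hσ⟩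

namespace SphericalMartingale

variable {O : Set E} {U μ : Measure E} {Ω : Type*} [MeasurableSpace Ω] {P : Measure Ω} {n m : ℕ}

theorem F_mem_of_le (M : SphericalMartingale O U μ P n) {k : ℕ} (hk : k ≤ n) (ω : Ω) :
    M.F k ω ∈ O := by
  induction k with
  | zero => exact M.F_zero_mem ω
  | succ k _ =>
    rw [M.F_succ k hk ω]
    simpa using M.segment_mem k hk ω 1 ⟨zero_le_one, le_rfl⟩

def stopped (M : SphericalMartingale O U μ P n) (m : ℕ) : SphericalMartingale O U μ P m where
  F k := M.F (min k n)
  X := M.X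
  r k := if k ≤ n then M.r k else 0
  measurable_F k := M.measurable_F _
  measurable_X := M.measurable_X
  measurable_r k := by
    split_ifs
    exacts [M.measurable_r k, measurable_const]
  map_F_zero := by simpa using M.map_F_zero
  map_X := M.map_X
  iIndepFun_drivers := by simpa using M.iIndepFun_drivers
  bounded_r k := by
    split_ifs
    exacts [M.bounded_r k, ⟨0, fun _ => ⟨le_rfl, le_rfl⟩⟩]
  F_succ k _ ω := by
    by_cases hk : k < n
    · simpa [min_eq_left hk.le, min_eq_left (show k + 1 ≤ n from hk), hk] using
        M.F_succ k hk ω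
    · simp [min_eq_right (not_lt.1 hk), min_eq_right (Nat.le_succ_of_le (not_lt.1 hk)), hk]
  adapted_r k _ := by
    by_cases hk : k < n
    · have hk' : k + 1 ≤ n := hk
      simp only [hk', if_true]
      exact M.adapted_r k hk
    · simp [hk, measurable_zero]
  F_zero_mem := by simpa using M.F_zero_mem
  segment_mem k _ ω lam hlam := by
    by_cases hk : k < n
    · simpa [min_eq_left hk.le, hk] using M.segment_mem k hk ω lam hlam
    · simpa [min_eq_right (not_lt.1 hk), hk] using M.F_mem_of_le le_rfl ω

theorem stopped_F_of_le (M : SphericalMartingale O U μ P n) (m : ℕ) {k : ℕ} (hk : n ≤ k) :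
    (M.stopped m).F k = M.F n := by
  simp [stopped, min_eq_right hk]

theorem measurable_drivers (M : SphericalMartingale O U μ P n) (k : ℕ) :
    Measurable (if k = 0 then M.F 0 else M.X k) := by
  split_ifs
  exacts [M.measurable_F 0, M.measurable_X k]

theorem map_drivers (M : SphericalMartingale O U μ P n) (k : ℕ) :
    P.map (if k = 0 then M.F 0 else M.X k) = if k = 0 then μ else U := by
  split_ifs with hk
  exacts [M.map_F_zero, M.map_X k (Nat.one_le_iff_ne_zero.2 hk)]

variable {Ω₁ Ω₂ : Type*} [MeasurableSpace Ω₁] [MeasurableSpace Ω₂] {P₁ : Measure Ω₁}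
  {P₂ : Measure Ω₂} {s : Set E}

theorem iIndepFun_mix_drivers [IsProbabilityMeasure P₁] [IsProbabilityMeasure P₂]
    [IsProbabilityMeasure U] (M₁ : SphericalMartingale O U μ P₁ n)
    (M₂ : SphericalMartingale O U μ P₂ n) (hs : MeasurableSet s) :
    iIndepFun (fun k => if k = 0 then selectByCoin s (M₁.F 0) (M₂.F 0)
      else if k = 1 then fun ω => ω.2.2 else selectByCoin s (M₁.X (k - 1)) (M₂.X (k - 1)))
      (P₁.prod (P₂.prod U)) := by
  have hinj : Function.Injective fun k : ℕ => if k = 1 then none else some (k - 1) := by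
    intro a b h
    simp only at h
    split_ifs at h <;> simp at h <;> omega
  convert (iIndepFun_option_selectByCoin (ν := U) hs M₁.measurable_drivers M₂.measurable_drivers
    M₁.iIndepFun_drivers M₂.iIndepFun_drivers
    fun k => by rw [M₁.map_drivers, M₂.map_drivers]).precomp hinj using 1
  funext k
  rcases k with _ | _ | k <;> simp

noncomputable def mix [IsProbabilityMeasure P₁] [IsProbabilityMeasure P₂] [IsProbabilityMeasure U]
    (M₁ : SphericalMartingale O U μ P₁ n) (M₂ : SphericalMartingale O U μ P₂ n)
    (hs : MeasurableSet s) : SphericalMartingale O U μ (P₁.prod (P₂.prod U)) (n + 1) where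
  -- `k - 1` truncates, so `F 0 = F 1`: step `1` only flips the coin.
  F k := selectByCoin s (M₁.F (k - 1)) (M₂.F (k - 1))
  X k := if k = 1 then fun ω => ω.2.2 else selectByCoin s (M₁.X (k - 1)) (M₂.X (k - 1))
  r k := if k = 1 then 0 else selectByCoin s (M₁.r (k - 1)) (M₂.r (k - 1))
  measurable_F k := measurable_selectByCoin hs (M₁.measurable_F _) (M₂.measurable_F _)
  measurable_X k := by
    split_ifs
    exacts [measurable_snd.snd,
      measurable_selectByCoin hs (M₁.measurable_X _) (M₂.measurable_X _)]
  measurable_r k := by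
    split_ifs
    exacts [measurable_const,
      measurable_selectByCoin hs (M₁.measurable_r _) (M₂.measurable_r _)]
  map_F_zero := by
    rw [map_selectByCoin_of_map_eq hs (M₁.measurable_F _) (M₂.measurable_F _)
      (M₁.map_F_zero.trans M₂.map_F_zero.symm)]
    exact M₁.map_F_zero
  map_X k hk := by
    split_ifs with h1
    · exact map_snd_snd_prod
    · rw [map_selectByCoin_of_map_eq hs (M₁.measurable_X _) (M₂.measurable_X _)
        ((M₁.map_X _ (by omega)).trans (M₂.map_X _ (by omega)).symm), M₁.map_X _ (by omega)]
  iIndepFun_drivers := iIndepFun_mix_drivers M₁ M₂ hs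
  bounded_r k := by
    split_ifs
    · exact ⟨0, fun _ => ⟨le_rfl, le_rfl⟩⟩
    · obtain ⟨C₁, hC₁⟩ := M₁.bounded_r (k - 1)
      obtain ⟨C₂, hC₂⟩ := M₂.bounded_r (k - 1)
      exact ⟨max C₁ C₂, selectByCoin_mem (A := Icc 0 (max C₁ C₂))
        (fun ω => ⟨(hC₁ ω).1, le_max_of_le_left (hC₁ ω).2⟩)
        (fun ω => ⟨(hC₂ ω).1, le_max_of_le_right (hC₂ ω).2⟩)⟩
  F_succ k hk ω := by
    rcases k with _ | k
    · simp
    · by_cases h : ω.2.2 ∈ s <;>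
        simp [h, M₁.F_succ k (by omega) ω.1, M₂.F_succ k (by omega) ω.2.1]
  adapted_r k hk := by
    classical
    rcases k with _ | k
    · exact measurable_const
    obtain ⟨ρ₁, hρ₁, hr₁⟩ := (M₁.adapted_r k (by omega)).exists_eq_measurable_comp
    obtain ⟨ρ₂, hρ₂, hr₂⟩ := (M₂.adapted_r k (by omega)).exists_eq_measurable_comp
    let Φ : E × (Fin (k + 1) → E) → ℝ := fun h =>
      if h.2 0 ∈ s then ρ₁ (h.1, Fin.tail h.2) else ρ₂ (h.1, Fin.tail h.2)
    have hΦ : Measurable Φ := by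
      have htail : Measurable fun h : E × (Fin (k + 1) → E) => (h.1, Fin.tail h.2) :=
        measurable_fst.prodMk
          (measurable_pi_lambda _ fun i => (measurable_pi_apply _).comp measurable_snd)
      exact Measurable.ite (((measurable_pi_apply 0).comp measurable_snd) hs) (hρ₁.comp htail)
        (hρ₂.comp htail)
    convert hΦ.comp (comap_measurable _) using 1
    funext ω
    by_cases h : ω.2.2 ∈ s <;> simp [Φ, h, hr₁, hr₂, Fin.tail_def]
  F_zero_mem := selectByCoin_mem M₁.F_zero_mem M₂.F_zero_mem
  segment_mem k hk ω lam hlam := by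
    rcases k with _ | k
    · simpa using selectByCoin_mem M₁.F_zero_mem M₂.F_zero_mem ω
    · by_cases h : ω.2.2 ∈ s <;> simp [h]
      · exact M₁.segment_mem k (by omega) ω.1 lam hlam
      · exact M₂.segment_mem k (by omega) ω.2.1 lam hlam

theorem mix_F_succ [IsProbabilityMeasure P₁] [IsProbabilityMeasure P₂] [IsProbabilityMeasure U]
    (M₁ : SphericalMartingale O U μ P₁ n) (M₂ : SphericalMartingale O U μ P₂ n)
    (hs : MeasurableSet s) (k : ℕ) :
    (M₁.mix M₂ hs).F (k + 1) = selectByCoin s (M₁.F k) (M₂.F k) :=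
  rfl

end SphericalMartingale

end

theorem stmt16_general (d : ℕ) (hd : 0 < d) (O : Set (EuclideanSpace ℝ (Fin d)))
    (U : Measure (EuclideanSpace ℝ (Fin d))) [IsProbabilityMeasure U]
    (hUhemi : U {y : EuclideanSpace ℝ (Fin d) | 0 < y ⟨0, hd⟩} = 1 / 2 ∧
      U {y : EuclideanSpace ℝ (Fin d) | y ⟨0, hd⟩ < 0} = 1 / 2)
    (μ σ' σ'' : Measure (EuclideanSpace ℝ (Fin d)))
    (h' : IsSphericalTerminalLaw d O U μ σ')
    (h'' : IsSphericalTerminalLaw d O U μ σ'') :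
    IsSphericalTerminalLaw d O U μ ((2 : ℝ≥0∞)⁻¹ • (σ' + σ'')) := by
  obtain ⟨n₁, Ω₁, _, P₁, _, M₁, rfl⟩ := isSphericalTerminalLaw_iff.1 h'
  obtain ⟨n₂, Ω₂, _, P₂, _, M₂, rfl⟩ := isSphericalTerminalLaw_iff.1 h''
  set s := {y : EuclideanSpace ℝ (Fin d) | 0 < y ⟨0, hd⟩}
  have hs : MeasurableSet s := measurableSet_lt measurable_const (by fun_prop)
  have hUs : U s = 2⁻¹ := by rw [hUhemi.1, one_div]
  have hUsc : U sᶜ = 2⁻¹ := by rw [prob_compl_eq_one_sub hs, hUs, ENNReal.one_sub_inv_two]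
  set N := max n₁ n₂
  refine isSphericalTerminalLaw_iff.2 ⟨N + 1, Ω₁ × Ω₂ × _, inferInstance, _, inferInstance,
    (M₁.stopped N).mix (M₂.stopped N) hs, ?_⟩
  rw [SphericalMartingale.mix_F_succ, map_selectByCoin hs ((M₁.stopped N).measurable_F N)
    ((M₂.stopped N).measurable_F N), M₁.stopped_F_of_le N (le_max_left n₁ n₂),
    M₂.stopped_F_of_le N (le_max_right n₁ n₂), hUs, hUsc, smul_add]

theorem stmt16 (d : ℕ) (hd : 0 < d) (O : Set (EuclideanSpace ℝ (Fin d)))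
    (hO : IsOpen O)
    (U : Measure (EuclideanSpace ℝ (Fin d))) [IsProbabilityMeasure U]
    (hUsphere : U (Metric.sphere (0 : EuclideanSpace ℝ (Fin d)) 1)ᶜ = 0)
    (hUhemi : U {y : EuclideanSpace ℝ (Fin d) | 0 < y ⟨0, hd⟩} = 1 / 2 ∧
      U {y : EuclideanSpace ℝ (Fin d) | y ⟨0, hd⟩ < 0} = 1 / 2)
    (μ σ' σ'' : Measure (EuclideanSpace ℝ (Fin d)))
    [IsProbabilityMeasure μ]
    (h' : IsSphericalTerminalLaw d O U μ σ')
    (h'' : IsSphericalTerminalLaw d O U μ σ'') :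
    IsSphericalTerminalLaw d O U μ ((2 : ℝ≥0∞)⁻¹ • (σ' + σ'')) :=
  stmt16_general d hd O U hUhemi μ σ' σ'' h' h''
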